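/- Let Ω ⊆ ℂⁿ be open, Φ : Ω → ℝ twice continuously real-differentiable, x₀ ∈ Ω, and let Ψ be holomorphic on a neighborhood of (x₀, conj x₀) in ℂⁿ × ℂⁿ with Ψ(x, conj x) = Φ(x) for x near x₀. Then for every ξ ∈ ℂⁿ, D²Ψ(x₀, conj x₀)((ξ,0),(0, conj ξ)) = L_Φ(x₀)(ξ), where D²Ψ is the second complex Fréchet derivative and L_Φ is the Levi form. Consequently, if L_Φ(x₀) is positive definite, then the ℂ-bilinear form (ξ,η) ↦ D²Ψ(x₀, conj x₀)((ξ,0),(0,η)) on ℂⁿ × ℂⁿ is nondegenerate, i.e. the mixed Hessian Ψ''_{xy}(x₀, conj x₀), viewed as a ℂ-linear map ℂⁿ → ℂⁿ, is invertible. -/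

import Mathlib

/-!
A holomorphic function `f` of several variables has a holomorphic derivative: by the Cauchy
formula on the complex line through `y` in direction `u`, `Df(y) u` is the circle integral of
`f (y + z u) / z²`, which can be differentiated in `y` under the integral sign because the Cauchy
estimates bound `Df` uniformly near the circle. So the complex Hessian `B` of `Ψ` at
`(x₀, conj x₀)` exists and is symmetric. Near `x₀` we have `Φ = Ψ ∘ J` for the `ℝ`-linear map
`J x = (x, conj x)`, whence `D²Φ(x₀)(ξ, η) = B (J ξ) (J η)`. With `a = (ξ, 0)`, `b = (0, conj ξ)`
one has `J ξ = a + b` and `J (i ξ) = i a - i b`, and polarization gives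
`4 B a b = B (J ξ) (J ξ) + B (J (i ξ)) (J (i ξ)) = 4 L_Φ(x₀)(ξ)`.
-/

open Complex

noncomputable section

/-- `ℂⁿ` with its Euclidean (Hermitian) norm. -/
abbrev En (n : ℕ) := EuclideanSpace ℂ (Fin n)

/-- Componentwise complex conjugation on `ℂⁿ`. -/
def conjV (n : ℕ) (x : En n) : En n :=
  (WithLp.equiv 2 (Fin n → ℂ)).symm fun j => (starRingEnd ℂ) (x j)

/-- The second real Fréchet derivative `D²Φ(y)(ξ,η)`. -/
def D2R (n : ℕ) (Φ : En n → ℝ) (y ξ η : En n) : ℝ :=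
  fderiv ℝ (fderiv ℝ Φ) y ξ η

/-- The Levi form `L_Φ(y)(ξ) = (1/4)(D²Φ(y)(ξ,ξ) + D²Φ(y)(iξ,iξ))`. -/
def Levi (n : ℕ) (Φ : En n → ℝ) (y ξ : En n) : ℝ :=
  (1/4) * (D2R n Φ y ξ ξ + D2R n Φ y (Complex.I • ξ) (Complex.I • ξ))

open Metric Real Filter Topology

theorem differentiableAt_clm_of_forall_apply {𝕜 D E F : Type*} [NontriviallyNormedField 𝕜]
    [CompleteSpace 𝕜] [NormedAddCommGroup D] [NormedSpace 𝕜 D] [NormedAddCommGroup E]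
    [NormedSpace 𝕜 E] [FiniteDimensional 𝕜 E] [NormedAddCommGroup F] [NormedSpace 𝕜 F]
    {g : D → E →L[𝕜] F} {x : D} (h : ∀ u, DifferentiableAt 𝕜 (fun y => g y u) x) :
    DifferentiableAt 𝕜 g x := by
  let d := Module.finrank 𝕜 E
  have hd : d = Module.finrank 𝕜 (Fin d → 𝕜) := (Module.finrank_fin_fun 𝕜).symm
  let e := ((ContinuousLinearEquiv.ofFinrankEq hd).arrowCongr (1 : F ≃L[𝕜] F)).trans
    (ContinuousLinearEquiv.piRing (Fin d))
  rw [← Function.id_comp g, ← e.symm_comp_self]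
  exact e.symm.differentiableAt.comp x (differentiableAt_pi.2 fun i => h _)

section Holomorphic

variable {E F : Type*} [NormedAddCommGroup E] [NormedSpace ℂ E]
  [NormedAddCommGroup F] [NormedSpace ℂ F]

theorem norm_fderiv_le_of_forall_norm_le {f : E → F} {c : E} {R M : ℝ} (hR : 0 < R)
    (hf : DifferentiableOn ℂ f (ball c R)) (hM : ∀ z ∈ ball c R, ‖f z‖ ≤ M) :
    ‖fderiv ℂ f c‖ ≤ 2 * M / R := by
  refine Complex.norm_fderiv_le_div_of_mapsTo_ball hf (fun z hz => ?_) hR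
  rw [mem_closedBall, dist_eq_norm]
  linarith [norm_sub_le (f z) (f c), hM z hz, hM c (mem_ball_self hR)]

theorem fderiv_apply_eq_circleIntegral [CompleteSpace F] {f : E → F} {y u : E} {r : ℝ}
    (hr : 0 < r) (hf : ∀ z ∈ closedBall (0 : ℂ) r, DifferentiableAt ℂ f (y + z • u)) :
    fderiv ℂ f y u = (2 * π * I)⁻¹ • ∮ z in C(0, r), (1 / z ^ 2) • f (y + z • u) := by
  have hline (z : ℂ) : HasDerivAt (fun w : ℂ => y + w • u) u z := by
    simpa using ((hasDerivAt_id z).smul_const u).const_add y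
  have hg : DifferentiableOn ℂ (fun z : ℂ => f (y + z • u)) (closedBall 0 r) := fun z hz =>
    ((hf z hz).comp z (hline z).differentiableAt).differentiableWithinAt
  have hderiv : deriv (fun z : ℂ => f (y + z • u)) 0 = fderiv ℂ f y u := by
    have hy : HasFDerivAt f (fderiv ℂ f y) (y + (0 : ℂ) • u) := by
      simpa using (hf 0 (mem_closedBall_self hr.le)).hasFDerivAt
    exact (hy.comp_hasDerivAt 0 (hline 0)).deriv
  have := hg.deriv_eq_smul_circleIntegral hr
  simp only [sub_zero] at this
  rw [this, hderiv, smul_smul, inv_mul_cancel₀ two_pi_I_ne_zero, one_smul]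

theorem differentiableAt_circleIntegral_comp_line [FiniteDimensional ℂ E] [FiniteDimensional ℂ F]
    {f : E → F} {p u : E} {r ε C : ℝ} (hr : 0 < r) (hε : 0 < ε)
    (hf : ∀ y ∈ ball p ε, ∀ z ∈ closedBall (0 : ℂ) r, DifferentiableAt ℂ f (y + z • u))
    (hC : ∀ y ∈ ball p ε, ∀ z ∈ closedBall (0 : ℂ) r, ‖fderiv ℂ f (y + z • u)‖ ≤ C) :
    DifferentiableAt ℂ (fun y => ∮ z in C(0, r), (1 / z ^ 2) • f (y + z • u)) p := by
  borelize E
  set γ := circleMap 0 r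
  set k : ℝ → ℂ := fun θ => deriv γ θ * (1 / γ θ ^ 2)
  have hγ_mem (θ : ℝ) : γ θ ∈ closedBall (0 : ℂ) r := circleMap_mem_closedBall 0 hr.le θ
  have hk_cont : Continuous k := by
    have hγ0 (θ : ℝ) : γ θ ^ 2 ≠ 0 := pow_ne_zero 2 (circleMap_ne_center hr.ne')
    simp only [k, deriv_circleMap, γ]
    exact ((continuous_circleMap 0 r).mul continuous_const).mul
      (continuous_const.div ((continuous_circleMap 0 r).pow 2) hγ0)
  have hk_norm (θ : ℝ) : ‖k θ‖ = r⁻¹ := by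
    simp only [k, γ, deriv_circleMap, norm_mul, norm_div, norm_pow, norm_circleMap_zero,
      abs_of_pos hr, norm_I, norm_one]
    field_simp
  have hline (y : E) : Continuous fun θ => y + γ θ • u :=
    continuous_const.add ((continuous_circleMap 0 r).smul continuous_const)
  have hF_cont : ∀ y ∈ ball p ε, Continuous fun θ => k θ • f (y + γ θ • u) := fun y hy =>
    hk_cont.smul <| continuous_iff_continuousAt.2 fun θ =>
      (hf y hy _ (hγ_mem θ)).continuousAt.comp (f := fun θ => y + γ θ • u)
        (hline y).continuousAt
  have hint := intervalIntegral.hasFDerivAt_integral_of_dominated_of_fderiv_le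
    (F' := fun y θ => k θ • fderiv ℂ f (y + γ θ • u)) (bound := fun _ => r⁻¹ * C)
    (a := 0) (b := 2 * π) (μ := MeasureTheory.volume) (ball_mem_nhds p hε)
    (eventually_of_mem (ball_mem_nhds p hε) fun y hy =>
      (hF_cont y hy).aestronglyMeasurable)
    ((hF_cont p (mem_ball_self hε)).intervalIntegrable _ _)
    (hk_cont.aestronglyMeasurable.smul
      ((measurable_fderiv ℂ f).comp (hline p).measurable).aestronglyMeasurable)
    (Eventually.of_forall fun θ _ y hy => by
      rw [norm_smul, hk_norm]
      exact mul_le_mul_of_nonneg_left (hC y hy _ (hγ_mem θ)) (by positivity))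
    intervalIntegrable_const
    (Eventually.of_forall fun θ _ y hy =>
      (((hf y hy _ (hγ_mem θ)).hasFDerivAt.comp y ((hasFDerivAt_id y).add_const _)).const_smul
        (k θ)))
  refine hint.differentiableAt.congr_of_eventuallyEq (Eventually.of_forall fun y => ?_)
  simp only [circleIntegral, k, smul_smul]
  rfl

theorem DifferentiableOn.differentiableAt_fderiv_apply [FiniteDimensional ℂ E]
    [FiniteDimensional ℂ F] {f : E → F} {U : Set E} (hf : DifferentiableOn ℂ f U) (hU : IsOpen U)
    {p : E} (hp : p ∈ U) (u : E) : DifferentiableAt ℂ (fun y => fderiv ℂ f y u) p := by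
  obtain ⟨δ, hδ, hδU⟩ : ∃ δ > 0, closedBall p δ ⊆ U :=
    nhds_basis_closedBall.mem_iff.1 (hU.mem_nhds hp)
  obtain ⟨M, hM⟩ :=
    (isCompact_closedBall p δ).exists_bound_of_continuousOn (hf.continuousOn.mono hδU)
  set r := δ / (4 * (‖u‖ + 1))
  have hr : 0 < r := by positivity
  have hru : r * ‖u‖ ≤ δ / 4 := by
    rw [div_mul_eq_mul_div, div_le_div_iff₀ (by positivity) (by positivity)]
    nlinarith [norm_nonneg u]
  have hnear : ∀ y ∈ ball p (δ / 4), ∀ z ∈ closedBall (0 : ℂ) r,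
      closedBall (y + z • u) (δ / 2) ⊆ closedBall p δ := by
    intro y hy z hz
    refine closedBall_subset_closedBall' ?_
    rw [dist_eq_norm, add_sub_right_comm]
    have hzu : ‖z • u‖ ≤ δ / 4 := by
      rw [norm_smul]
      exact (mul_le_mul_of_nonneg_right (mem_closedBall_zero_iff.1 hz) (norm_nonneg u)).trans hru
    linarith [norm_add_le (y - p) (z • u), mem_ball_iff_norm.1 hy]
  have hdiff : ∀ y ∈ ball p (δ / 4), ∀ z ∈ closedBall (0 : ℂ) r,
      DifferentiableAt ℂ f (y + z • u) := fun y hy z hz =>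
    hf.differentiableAt <| hU.mem_nhds <|
      hδU (hnear y hy z hz (mem_closedBall_self (by positivity)))
  have hbound : ∀ y ∈ ball p (δ / 4), ∀ z ∈ closedBall (0 : ℂ) r,
      ‖fderiv ℂ f (y + z • u)‖ ≤ 2 * M / (δ / 2) := fun y hy z hz =>
    norm_fderiv_le_of_forall_norm_le (by positivity)
      (hf.mono ((ball_subset_closedBall.trans (hnear y hy z hz)).trans hδU))
      (fun w hw => hM w (hnear y hy z hz (ball_subset_closedBall hw)))
  have hrep : (fun y => fderiv ℂ f y u) =ᶠ[𝓝 p]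
      fun y => (2 * π * I)⁻¹ • ∮ z in C(0, r), (1 / z ^ 2) • f (y + z • u) :=
    eventually_of_mem (ball_mem_nhds p (by positivity)) fun y hy =>
      fderiv_apply_eq_circleIntegral hr (hdiff y hy)
  exact ((differentiableAt_circleIntegral_comp_line hr (by positivity) hdiff hbound).const_smul
    _).congr_of_eventuallyEq hrep

theorem DifferentiableOn.differentiableAt_fderiv [FiniteDimensional ℂ E] [FiniteDimensional ℂ F]
    {f : E → F} {U : Set E} (hf : DifferentiableOn ℂ f U) (hU : IsOpen U) {p : E} (hp : p ∈ U) :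
    DifferentiableAt ℂ (fderiv ℂ f) p :=
  differentiableAt_clm_of_forall_apply (hf.differentiableAt_fderiv_apply hU hp)

end Holomorphic

section SecondDerivative

variable {𝕜 E F G : Type*} [NontriviallyNormedField 𝕜] [NormedAddCommGroup E] [NormedSpace 𝕜 E]
  [NormedAddCommGroup F] [NormedSpace 𝕜 F] [NormedAddCommGroup G] [NormedSpace 𝕜 G]

theorem fderiv_fderiv_comp_clm_apply {f : E → F} {f'' : E →L[𝕜] E →L[𝕜] F} (J : G →L[𝕜] E)
    {x : G} (hf : ∀ᶠ y in 𝓝 (J x), DifferentiableAt 𝕜 f y)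
    (hf'' : HasFDerivAt (fderiv 𝕜 f) f'' (J x)) (ξ η : G) :
    fderiv 𝕜 (fderiv 𝕜 (f ∘ J)) x ξ η = f'' (J ξ) (J η) := by
  let P : (E →L[𝕜] F) →L[𝕜] G →L[𝕜] F := (ContinuousLinearMap.compL 𝕜 G E F).flip J
  have hfJ : fderiv 𝕜 (f ∘ J) =ᶠ[𝓝 x] fun y => P (fderiv 𝕜 f (J y)) := by
    filter_upwards [J.continuous.continuousAt.preimage_mem_nhds hf] with y hy
    exact (hy.hasFDerivAt.comp y J.hasFDerivAt).fderiv
  rw [((P.hasFDerivAt.comp x (hf''.comp x J.hasFDerivAt)).congr_of_eventuallyEq hfJ).fderiv]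
  rfl

theorem ContinuousLinearMap.fderiv_fderiv_comp_left_apply {f : E → F} {x : E} (L : F →L[𝕜] G)
    (hf : ContDiffAt 𝕜 2 f x) (ξ η : E) :
    fderiv 𝕜 (fderiv 𝕜 (L ∘ f)) x ξ η = L (fderiv 𝕜 (fderiv 𝕜 f) x ξ η) := by
  have h := congrArg (fun T => T ![ξ, η]) (L.iteratedFDeriv_comp_left hf (i := 2) le_rfl)
  simpa only [iteratedFDeriv_two_apply, ContinuousLinearMap.compContinuousMultilinearMap_coe,
    Function.comp_apply, Matrix.cons_val_zero, Matrix.cons_val_one] using h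

end SecondDerivative

section RestrictScalars

variable {𝕜 𝕜' E F : Type*} [NontriviallyNormedField 𝕜] [NontriviallyNormedField 𝕜']
  [NormedAlgebra 𝕜 𝕜'] [NormedAddCommGroup E] [NormedSpace 𝕜 E] [NormedSpace 𝕜' E]
  [IsScalarTower 𝕜 𝕜' E] [NormedAddCommGroup F] [NormedSpace 𝕜 F] [NormedSpace 𝕜' F]
  [IsScalarTower 𝕜 𝕜' F]

theorem HasFDerivAt.fderiv_restrictScalars {f : E → F} {f'' : E →L[𝕜'] E →L[𝕜'] F} {x : E}
    (hf : ∀ᶠ y in 𝓝 x, DifferentiableAt 𝕜' f y) (hf'' : HasFDerivAt (fderiv 𝕜' f) f'' x) :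
    HasFDerivAt (fderiv 𝕜 f) (f''.bilinearRestrictScalars 𝕜) x := by
  have hf' : fderiv 𝕜 f =ᶠ[𝓝 x]
      fun y => ContinuousLinearMap.restrictScalarsL 𝕜' E F 𝕜 𝕜 (fderiv 𝕜' f y) := by
    filter_upwards [hf] with y hy using hy.fderiv_restrictScalars 𝕜
  exact ((ContinuousLinearMap.restrictScalarsL 𝕜' E F 𝕜 𝕜).hasFDerivAt.comp x
    (hf''.restrictScalars 𝕜)).congr_of_eventuallyEq hf'

end RestrictScalars

theorem ContinuousLinearMap.four_smul_apply_eq_of_symm {V F : Type*} [NormedAddCommGroup V]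
    [NormedSpace ℂ V] [NormedAddCommGroup F] [NormedSpace ℂ F] (B : V →L[ℂ] V →L[ℂ] F)
    (hB : ∀ v w, B v w = B w v) (a b : V) :
    (4 : ℂ) • B a b = B (a + b) (a + b) + B (I • a - I • b) (I • a - I • b) := by
  simp only [map_add, map_sub, map_smul, add_apply, sub_apply, smul_apply, hB b a]
  match_scalars <;> ring_nf <;> simp only [I_sq] <;> ring

def conjCLM (n : ℕ) : En n →L[ℝ] En n :=
  (LinearIsometryEquiv.piLpCongrRight 2 fun _ : Fin n => conjLIE).toContinuousLinearEquiv

theorem conjV_I_smul (n : ℕ) (ξ : En n) : conjV n (I • ξ) = -I • conjV n ξ := by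
  ext j
  simp [conjV]

theorem apply_inl_inr_eq_levi {n : ℕ} {Φ : En n → ℝ} {x₀ : En n}
    (B : En n × En n →L[ℂ] En n × En n →L[ℂ] ℂ) (hB : ∀ v w, B v w = B w v)
    (hHess : ∀ ξ η, (D2R n Φ x₀ ξ η : ℂ) = B (ξ, conjV n ξ) (η, conjV n η)) (ξ : En n) :
    B (ξ, 0) (0, conjV n ξ) = Levi n Φ x₀ ξ := by
  have h4 := B.four_smul_apply_eq_of_symm hB (ξ, 0) (0, conjV n ξ)
  simp only [Prod.mk_add_mk, Prod.smul_mk, Prod.mk_sub_mk, add_zero, zero_add, smul_zero,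
    sub_zero, zero_sub, ← neg_smul, ← conjV_I_smul, ← hHess, smul_eq_mul] at h4
  rw [Levi]
  push_cast
  linear_combination h4 / 4

theorem statement5 (n : ℕ)
    (Ω : Set (En n)) (hΩ : IsOpen Ω)
    (Φ : En n → ℝ) (hΦ : ContDiffOn ℝ 2 Φ Ω)
    (x₀ : En n) (hx₀ : x₀ ∈ Ω)
    (Ψ : En n × En n → ℂ) (U : Set (En n × En n)) (hU : IsOpen U)
    (hmem : (x₀, conjV n x₀) ∈ U) (hΨ : DifferentiableOn ℂ Ψ U)
    (hpol : ∃ W : Set (En n), IsOpen W ∧ x₀ ∈ W ∧ ∀ x ∈ W, Ψ (x, conjV n x) = (Φ x : ℂ)) :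
    (∀ ξ : En n,
      fderiv ℂ (fderiv ℂ Ψ) (x₀, conjV n x₀) (ξ, 0) (0, conjV n ξ) = (Levi n Φ x₀ ξ : ℂ)) ∧
    ((∀ ξ : En n, ξ ≠ 0 → 0 < Levi n Φ x₀ ξ) →
      ∀ ξ : En n,
        (∀ η : En n, fderiv ℂ (fderiv ℂ Ψ) (x₀, conjV n x₀) (ξ, 0) (0, η) = 0) → ξ = 0) := by
  obtain ⟨W, hW, hx₀W, hΨΦ⟩ := hpol
  set J : En n →L[ℝ] En n × En n := (ContinuousLinearMap.id ℝ _).prod (conjCLM n)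
  set B := fderiv ℂ (fderiv ℂ Ψ) (x₀, conjV n x₀)
  have hΨ_near : ∀ᶠ y in 𝓝 (J x₀), DifferentiableAt ℂ Ψ y :=
    eventually_of_mem (hU.mem_nhds hmem) fun y hy => hΨ.differentiableAt (hU.mem_nhds hy)
  have hB : HasFDerivAt (fderiv ℂ Ψ) B (J x₀) :=
    (hΨ.differentiableAt_fderiv hU hmem).hasFDerivAt
  have hB_symm : ∀ v w, B v w = B w v :=
    second_derivative_symmetric_of_eventually (hΨ_near.mono fun y hy => hy.hasFDerivAt) hB
  have hΦΨ : ofRealCLM ∘ Φ =ᶠ[𝓝 x₀] Ψ ∘ J :=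
    eventually_of_mem (hW.mem_nhds hx₀W) fun x hx => (hΨΦ x hx).symm
  have hHess (ξ η : En n) : (D2R n Φ x₀ ξ η : ℂ) = B (ξ, conjV n ξ) (η, conjV n η) := by
    rw [D2R, ← ofRealCLM_apply, ← ofRealCLM.fderiv_fderiv_comp_left_apply
      (hΦ.contDiffAt (hΩ.mem_nhds hx₀)), hΦΨ.fderiv.fderiv_eq]
    exact fderiv_fderiv_comp_clm_apply J (hΨ_near.mono fun y hy => hy.restrictScalars ℝ)
      (hB.fderiv_restrictScalars hΨ_near) ξ η
  have hLevi (ξ : En n) : B (ξ, 0) (0, conjV n ξ) = Levi n Φ x₀ ξ :=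
    apply_inl_inr_eq_levi B hB_symm hHess ξ
  refine ⟨hLevi, fun hpos ξ hξ => ?_⟩
  by_contra hne
  have h0 := hξ (conjV n ξ)
  rw [hLevi, ofReal_eq_zero] at h0
  exact (hpos ξ hne).ne' h0

end
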